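/- arXiv:2308.10017 — 2 statements merged into one kernel-verified Lean document; each statement's English description precedes it below -/
import Mathlib

section
/- Let 𝔄 be a unital C*-algebra, let E and F be Hilbert 𝔄-modules with E full, and let Ψ : E → F be a bijective 𝔄-linear orthogonality-preserving map. Let (V_n)_{n∈ℕ*} be a sequence of orthogonally complemented submodules of E. Then (Ψ(V_n))_{n∈ℕ*} is a sequence of orthogonally complemented submodules of F, and the orthogonal projection onto Ψ(V_n) satisfies P_{Ψ(V_n)} = Ψ ∘ P_{V_n} ∘ Ψ⁻¹ for every n ∈ ℕ*. -/
open scoped InnerProductSpace RightActions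

/-- The December 2024 Mathlib `CStarModule` (right Hilbert modules, action of `Aᵐᵒᵖ`),
restored under a new name since Mathlib's `CStarModule` now means left modules. -/
class RightCStarModule (A : outParam Type*) (E : Type*) [NonUnitalSemiring A] [StarRing A]
    [Module ℂ A] [AddCommGroup E] [Module ℂ E] [PartialOrder A] [SMul Aᵐᵒᵖ E] [Norm A] [Norm E]
    extends Inner A E where
  inner_add_right {x} {y} {z} : inner x (y + z) = inner x y + inner x z
  inner_self_nonneg {x} : 0 ≤ inner x x
  inner_self {x} : inner x x = 0 ↔ x = 0
  inner_op_smul_right {a : A} {x y : E} : inner x (y <• a) = inner x y * a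
  inner_smul_right_complex {z : ℂ} {x} {y} : inner x (z • y) = z • inner x y
  star_inner x y : star (inner x y) = inner y x
  norm_eq_sqrt_norm_inner_self x : ‖x‖ = Real.sqrt ‖inner x x‖

variable {𝔄 : Type*} [CStarAlgebra 𝔄] [PartialOrder 𝔄] [StarOrderedRing 𝔄]
variable {E : Type*} [NormedAddCommGroup E] [NormedSpace ℂ E] [Module 𝔄ᵐᵒᵖ E]
  [RightCStarModule 𝔄 E] [CompleteSpace E]
variable {F : Type*} [NormedAddCommGroup F] [NormedSpace ℂ F] [Module 𝔄ᵐᵒᵖ F]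
  [RightCStarModule 𝔄 F] [CompleteSpace F]

/-- An element of a C*-algebra is *strictly positive* if it is positive and invertible. -/
def IsStrictlyPositive' (a : 𝔄) : Prop := 0 ≤ a ∧ IsUnit a

/-- A *weight* of the C*-algebra `𝔄` is a sequence of central strictly positive elements. -/
def IsWeight (ω : ℕ → 𝔄) : Prop :=
  ∀ n, ω n ∈ Set.center 𝔄 ∧ IsStrictlyPositive' (ω n)

/-- `Q` is the orthogonal projection of the Hilbert `𝔄`-module `M` onto the orthogonally
complemented submodule `K`: a continuous linear `𝔄`-linear idempotent which is self-adjoint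
with respect to the `𝔄`-valued inner product and has range `K`. -/
def IsOrthoProjMapOnto {M : Type*} [NormedAddCommGroup M] [NormedSpace ℂ M]
    [Module 𝔄ᵐᵒᵖ M] [RightCStarModule 𝔄 M] (Q : M → M) (K : Submodule 𝔄ᵐᵒᵖ M) : Prop :=
  Continuous Q ∧ (∀ x y : M, Q (x + y) = Q x + Q y) ∧
  (∀ (c : ℂ) (x : M), Q (c • x) = c • Q x) ∧
  (∀ (a : 𝔄) (x : M), Q (x <• a) = (Q x) <• a) ∧
  (∀ x : M, Q (Q x) = Q x) ∧
  (∀ x y : M, ⟪Q x, y⟫_𝔄 = ⟪x, Q y⟫_𝔄) ∧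
  (∀ x : M, Q x ∈ K) ∧ (∀ x ∈ K, Q x = x)

/-- The Hilbert `𝔄`-module `E` is *full* if the linear span of the inner products
`⟪x, y⟫`, `x y : E`, is dense in `𝔄`. -/
def IsFullModule (𝔄 : outParam Type*) (E : Type*) [CStarAlgebra 𝔄] [PartialOrder 𝔄]
    [StarOrderedRing 𝔄] [NormedAddCommGroup E] [NormedSpace ℂ E] [Module 𝔄ᵐᵒᵖ E]
    [RightCStarModule 𝔄 E] : Prop :=
  closure ((Submodule.span ℂ {a : 𝔄 | ∃ x y : E, a = ⟪x, y⟫_𝔄} : Submodule ℂ 𝔄) : Set 𝔄)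
    = Set.univ

/-- `Ψ : E → F` is orthogonality preserving. -/
def IsOrthogonalityPreserving (Ψ : E → F) : Prop :=
  ∀ x y : E, ⟪x, y⟫_𝔄 = 0 → ⟪Ψ x, Ψ y⟫_𝔄 = 0

/-!
Write `P` for the projection onto `V` and `Q = Ψ ∘ P ∘ Ψ⁻¹`. Since `P a ⊥ b - P b` and
`a - P a ⊥ P b`, orthogonality preservation gives
`⟪Q (Ψ a), Ψ b⟫ = ⟪Ψ (P a), Ψ (P b)⟫ = ⟪Ψ a, Q (Ψ b)⟫`, so `Q` is a symmetric idempotent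
with range `Ψ(V)`. Over a unital algebra `Ψ` is automatically `ℂ`-linear, and a symmetric
`ℂ`-linear map on a Hilbert module is bounded by the closed graph theorem
(Hellinger–Toeplitz), using continuity of the inner product from the Cauchy–Schwarz inequality.
-/

section

variable {A M N : Type*} [CStarAlgebra A] [PartialOrder A]
  [NormedAddCommGroup M] [NormedSpace ℂ M] [Module Aᵐᵒᵖ M] [RightCStarModule A M]
  [NormedAddCommGroup N] [NormedSpace ℂ N] [Module Aᵐᵒᵖ N] [RightCStarModule A N]

namespace RightCStarModule

lemma inner_add_left {x y z : M} : ⟪x + y, z⟫_A = ⟪x, z⟫_A + ⟪y, z⟫_A := by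
  rw [← star_inner z, inner_add_right, star_add, star_inner, star_inner]

lemma inner_sub_right {x y z : M} : ⟪x, y - z⟫_A = ⟪x, y⟫_A - ⟪x, z⟫_A := by
  rw [eq_sub_iff_add_eq, ← inner_add_right, sub_add_cancel]

lemma inner_sub_left {x y z : M} : ⟪x - y, z⟫_A = ⟪x, z⟫_A - ⟪y, z⟫_A := by
  rw [eq_sub_iff_add_eq, ← inner_add_left, sub_add_cancel]

lemma inner_zero_left {y : M} : ⟪(0 : M), y⟫_A = 0 := by
  simpa using inner_sub_left (A := A) (x := (0 : M)) (y := 0) (z := y)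

lemma inner_op_smul_left {a : A} {x y : M} : ⟪x <• a, y⟫_A = star a * ⟪x, y⟫_A := by
  rw [← star_inner y, inner_op_smul_right, star_mul, star_inner]

lemma inner_smul_left_complex {c : ℂ} {x y : M} : ⟪c • x, y⟫_A = star c • ⟪x, y⟫_A := by
  rw [← star_inner y, inner_smul_right_complex, star_smul, star_inner]

lemma ext_inner_right {u v : M} (h : ∀ y : M, ⟪y, u⟫_A = ⟪y, v⟫_A) : u = v := by
  rw [← sub_eq_zero, ← inner_self (A := A), inner_sub_right, h, sub_self]

lemma complex_smul_eq_op_smul (c : ℂ) (x : M) : c • x = x <• (c • (1 : A)) :=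
  ext_inner_right fun y => by
    rw [inner_smul_right_complex, inner_op_smul_right, mul_smul_comm, mul_one]

lemma star_inner_mul_inner_le [StarOrderedRing A] (x y : M) :
    star ⟪x, y⟫_A * ⟪x, y⟫_A ≤ ‖x‖ ^ 2 • ⟪y, y⟫_A := by
  rcases eq_or_ne x 0 with rfl | hx
  · simp [inner_zero_left]
  have hnorm : ‖⟪x, x⟫_A‖ = ‖x‖ ^ 2 := by
    rw [norm_eq_sqrt_norm_inner_self x, Real.sq_sqrt (norm_nonneg _)]
  have hpos : 0 < ‖x‖ ^ 2 := by
    rw [← hnorm, norm_pos_iff, Ne, inner_self]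
    exact hx
  -- Expand `0 ≤ ⟪x a - ‖x‖² y, x a - ‖x‖² y⟫` with `a = ⟪x, y⟫`.
  have hexpand : ⟪x <• ⟪x, y⟫_A - ((‖x‖ ^ 2 : ℝ) : ℂ) • y,
      x <• ⟪x, y⟫_A - ((‖x‖ ^ 2 : ℝ) : ℂ) • y⟫_A =
      star ⟪x, y⟫_A * ⟪x, x⟫_A * ⟪x, y⟫_A - (2 * ‖x‖ ^ 2) • (star ⟪x, y⟫_A * ⟪x, y⟫_A)
        + (‖x‖ ^ 2) • (‖x‖ ^ 2) • ⟪y, y⟫_A := by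
    simp only [inner_sub_left, inner_sub_right, inner_op_smul_left, inner_op_smul_right,
      inner_smul_left_complex, inner_smul_right_complex, Complex.star_def, Complex.conj_ofReal,
      ← star_inner x y, sub_mul]
    simp only [Complex.coe_smul, smul_mul_assoc, mul_assoc, smul_sub, two_mul, add_smul]
    abel
  have hconj : star ⟪x, y⟫_A * ⟪x, x⟫_A * ⟪x, y⟫_A ≤ ‖x‖ ^ 2 • (star ⟪x, y⟫_A * ⟪x, y⟫_A) :=
    hnorm ▸ CStarAlgebra.star_left_conjugate_le_norm_smul (star_inner x x)
  have hnonneg : (0 : A) ≤ ‖x‖ ^ 2 • (‖x‖ ^ 2 • ⟪y, y⟫_A - star ⟪x, y⟫_A * ⟪x, y⟫_A) := by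
    have := add_nonneg (hexpand ▸ inner_self_nonneg) (sub_nonneg.mpr hconj)
    convert this using 1
    rw [smul_sub, two_mul, add_smul]
    abel
  exact sub_nonneg.mp ((smul_nonneg_iff_nonneg_of_pos_left hpos).mp hnonneg)

lemma norm_inner_le [StarOrderedRing A] (x y : M) : ‖⟪x, y⟫_A‖ ≤ ‖x‖ * ‖y‖ := by
  have hsq : ‖⟪x, y⟫_A‖ ^ 2 ≤ (‖x‖ * ‖y‖) ^ 2 := calc
    ‖⟪x, y⟫_A‖ ^ 2 = ‖star ⟪x, y⟫_A * ⟪x, y⟫_A‖ := by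
      rw [CStarRing.norm_star_mul_self, pow_two]
    _ ≤ ‖‖x‖ ^ 2 • ⟪y, y⟫_A‖ :=
      CStarAlgebra.norm_le_norm_of_nonneg_of_le (star_mul_self_nonneg _)
        (star_inner_mul_inner_le x y)
    _ = (‖x‖ * ‖y‖) ^ 2 := by
      rw [norm_smul, Real.norm_of_nonneg (by positivity), mul_pow,
        norm_eq_sqrt_norm_inner_self y, Real.sq_sqrt (norm_nonneg _)]
  exact (pow_le_pow_iff_left₀ (norm_nonneg _) (by positivity) two_ne_zero).mp hsq

lemma continuous_inner_right [StarOrderedRing A] (x : M) : Continuous fun y : M => ⟪x, y⟫_A :=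
  AddMonoidHomClass.continuous_of_bound
    (AddMonoidHom.mk' (fun y : M => ⟪x, y⟫_A) fun _ _ => inner_add_right) ‖x‖
    (norm_inner_le x)

lemma map_complex_smul {𝓕 : Type*} [FunLike 𝓕 M N] [LinearMapClass 𝓕 Aᵐᵒᵖ M N] (f : 𝓕)
    (c : ℂ) (x : M) : f (c • x) = c • f x := by
  rw [complex_smul_eq_op_smul c x, complex_smul_eq_op_smul c (f x)]
  exact map_smul f _ x

theorem continuous_of_inner_map_eq [StarOrderedRing A] [CompleteSpace M] (T : M →ₗ[ℂ] M)
    (hT : ∀ x y : M, ⟪T x, y⟫_A = ⟪x, T y⟫_A) : Continuous T := by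
  refine T.continuous_of_seq_closed_graph fun u x y hu hTu => ext_inner_right fun z => ?_
  have hy := ((continuous_inner_right z).tendsto y).comp hTu
  have hTx := ((continuous_inner_right (T z)).tendsto x).comp hu
  simp only [hT] at hTx
  exact tendsto_nhds_unique hy hTx

end RightCStarModule

lemma IsOrthogonalityPreserving.inner_map_map_eq {𝓕 : Type*} [FunLike 𝓕 M N]
    [AddMonoidHomClass 𝓕 M N] {Ψ : 𝓕} (hΨ : IsOrthogonalityPreserving (𝔄 := A) (Ψ : M → N))
    {P : M → M} (hPidem : ∀ x, P (P x) = P x) (hPsymm : ∀ x y, ⟪P x, y⟫_A = ⟪x, P y⟫_A)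
    (a b : M) : ⟪Ψ (P a), Ψ b⟫_A = ⟪Ψ a, Ψ (P b)⟫_A := by
  have hleft : ⟪P a, b - P b⟫_A = 0 := by
    rw [RightCStarModule.inner_sub_right, hPsymm a b, hPsymm a (P b), hPidem, sub_self]
  have hright : ⟪a - P a, P b⟫_A = 0 := by
    rw [RightCStarModule.inner_sub_left, hPsymm a (P b), hPidem, sub_self]
  have hleft' := hΨ _ _ hleft
  have hright' := hΨ _ _ hright
  rw [map_sub, RightCStarModule.inner_sub_right, sub_eq_zero] at hleft'
  rw [map_sub, RightCStarModule.inner_sub_left, sub_eq_zero] at hright'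
  rw [hleft', hright']

theorem IsOrthoProjMapOnto.linearEquiv_conj [StarOrderedRing A] [CompleteSpace N]
    {P : M → M} {V : Submodule Aᵐᵒᵖ M} (hP : IsOrthoProjMapOnto P V) (Ψ : M ≃ₗ[Aᵐᵒᵖ] N)
    (hΨ : IsOrthogonalityPreserving (𝔄 := A) (Ψ : M → N)) :
    IsOrthoProjMapOnto (fun y : N => Ψ (P (Ψ.symm y))) (V.map (Ψ : M →ₗ[Aᵐᵒᵖ] N)) := by
  obtain ⟨-, hPadd, hPsmul, hPop, hPidem, hPsymm, hPmem, hPfix⟩ := hP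
  let Q : N →ₗ[ℂ] N :=
    { toFun := fun y => Ψ (P (Ψ.symm y))
      map_add' := fun x y => by simp only [map_add, hPadd]
      map_smul' := fun c y => by
        simp only [RingHom.id_apply, RightCStarModule.map_complex_smul, hPsmul] }
  have hQsymm : ∀ x y : N, ⟪Q x, y⟫_A = ⟪x, Q y⟫_A := fun x y => by
    have := hΨ.inner_map_map_eq hPidem hPsymm (Ψ.symm x) (Ψ.symm y)
    rwa [Ψ.apply_symm_apply, Ψ.apply_symm_apply] at this
  refine ⟨RightCStarModule.continuous_of_inner_map_eq Q hQsymm, Q.map_add, Q.map_smul,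
    fun a x => ?_, fun x => ?_, hQsymm, fun x => ⟨P (Ψ.symm x), hPmem _, rfl⟩, ?_⟩
  · simp [hPop]
  · simp [hPidem]
  · rintro _ ⟨v, hv, rfl⟩
    simp [hPfix v hv]

end

theorem image_orthoProjection_of_orthogonalityPreserving_general
    (Ψ : E ≃ₗ[𝔄ᵐᵒᵖ] F)
    (horth : IsOrthogonalityPreserving (𝔄 := 𝔄) (Ψ : E → F))
    (V : ℕ → Submodule 𝔄ᵐᵒᵖ E) (P : ℕ → E → E)
    (hproj : ∀ n, IsOrthoProjMapOnto (P n) (V n)) :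
    ∀ n, IsOrthoProjMapOnto (fun y : F => Ψ (P n (Ψ.symm y)))
      ((V n).map (Ψ : E →ₗ[𝔄ᵐᵒᵖ] F)) :=
  fun n => (hproj n).linearEquiv_conj Ψ horth

/-- Theorem 3.7 (part 1): let `Ψ : E → F` be a bijective `𝔄`-linear orthogonality-preserving
map between Hilbert `𝔄`-modules, with `E` full. If `(V_n)_n` is a sequence of orthogonally
complemented submodules of `E` (with orthogonal projections `P n`), then each `Ψ(V_n)` is an
orthogonally complemented submodule of `F` with orthogonal projection `Ψ ∘ P_{V_n} ∘ Ψ⁻¹`. -/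
theorem image_orthoProjection_of_orthogonalityPreserving
    (Ψ : E ≃ₗ[𝔄ᵐᵒᵖ] F) (hfull : IsFullModule 𝔄 E)
    (horth : IsOrthogonalityPreserving (𝔄 := 𝔄) (Ψ : E → F))
    (V : ℕ → Submodule 𝔄ᵐᵒᵖ E) (P : ℕ → E → E)
    (hproj : ∀ n, IsOrthoProjMapOnto (P n) (V n)) :
    ∀ n, IsOrthoProjMapOnto (fun y : F => Ψ (P n (Ψ.symm y)))
      ((V n).map (Ψ : E →ₗ[𝔄ᵐᵒᵖ] F)) :=
  image_orthoProjection_of_orthogonalityPreserving_general Ψ horth V P hproj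
end

section
/- Let 𝔄 be a unital C*-algebra, ℌ a Hilbert 𝔄-module, and (ℌ_n)_{n∈ℕ*} a sequence of orthogonally complemented submodules of ℌ. Let 𝔪((ℌ_n)) denote the set of weights (ω_n)_{n∈ℕ*} of 𝔄 such that ((ℌ_n, ω_n))_{n∈ℕ*} is a *-fusion frame of ℌ. Then for all (α_n), (β_n) ∈ 𝔪((ℌ_n)) the sequence (α_n + β_n)_{n∈ℕ*} belongs to 𝔪((ℌ_n)), and for every λ ∈ ℝ with λ > 0, (λα_n)_{n∈ℕ*} belongs to 𝔪((ℌ_n)); thus 𝔪((ℌ_n)) is a convex cone of the ℂ-vector space 𝔄^{ℕ*}. -/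
open scoped InnerProductSpace RightActions

variable {𝔄 : Type*} [CStarAlgebra 𝔄] [PartialOrder 𝔄] [StarOrderedRing 𝔄]
variable {H : Type*} [NormedAddCommGroup H] [NormedSpace ℂ H] [Module 𝔄ᵐᵒᵖ H]
  [RightCStarModule 𝔄 H] [CompleteSpace H]

/-- `P` is the orthogonal projection of the Hilbert `𝔄`-module `H` onto the orthogonally
complemented submodule `K`: a bounded `𝔄`-linear idempotent which is self-adjoint with
respect to the `𝔄`-valued inner product and has range `K`. -/
def IsOrthoProjectionOnto (P : H →L[ℂ] H) (K : Submodule 𝔄ᵐᵒᵖ H) : Prop :=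
  (∀ (a : 𝔄) (x : H), P (x <• a) = (P x) <• a) ∧
  (∀ x, P (P x) = P x) ∧
  (∀ x y : H, ⟪P x, y⟫_𝔄 = ⟪x, P y⟫_𝔄) ∧
  (∀ x, P x ∈ K) ∧ (∀ x ∈ K, P x = x)

/-- The weighted sequence of orthogonally complemented submodules whose orthogonal
projections are `P n` is a *-fusion frame of `H` with lower bound `A` and upper bound `B`. -/
def IsFusionFrameWith (P : ℕ → H →L[ℂ] H) (ω : ℕ → 𝔄) (A B : 𝔄) : Prop :=
  IsStrictlyPositive' A ∧ IsStrictlyPositive' B ∧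
  ∀ x : H, Summable (fun n => ω n ^ 2 * ⟪P n x, P n x⟫_𝔄) ∧
    ⟪x <• A, x <• A⟫_𝔄 ≤ ∑' n, ω n ^ 2 * ⟪P n x, P n x⟫_𝔄 ∧
    (∑' n, ω n ^ 2 * ⟪P n x, P n x⟫_𝔄) ≤ ⟪x <• B, x <• B⟫_𝔄

/-- A *-fusion frame (with some pair of strictly positive bounds). -/
def IsFusionFrame (P : ℕ → H →L[ℂ] H) (ω : ℕ → 𝔄) : Prop :=
  ∃ A B : 𝔄, IsFusionFrameWith P ω A B

/-! Frame conditions are compared termwise: for central positive weights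
`α_n² ≤ (α_n + β_n)² ≤ 2 (α_n² + β_n²)` and `(l α_n)² = l² α_n²`, and centrality lets these
inequalities survive multiplication by `|P_n x|² ≥ 0`. Lower bounds then transfer directly. Since
the bounds need not be central, `|B₁ x|² + |B₂ x|²` is not of the form `|B x|²`, so each upper bound
is first replaced by the scalar bound `‖B‖² ⟨x, x⟩`: the frame sum satisfies `S (x a) = a* S(x) a`,
and testing it on `x (⟨x, x⟩ + ε)^(-1/2)`, whose inner square is at most `1`, gives
`S x ≤ ‖B‖² (⟨x, x⟩ + ε)` for every `ε > 0`. -/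

open Filter Topology

lemma le_of_forall_pos_le_add_smul {M : Type*} [AddCommGroup M] [Module ℝ M] [TopologicalSpace M]
    [ContinuousAdd M] [ContinuousSMul ℝ M] [PartialOrder M] [OrderClosedTopology M] {a b c : M}
    (h : ∀ ε : ℝ, 0 < ε → a ≤ b + ε • c) : a ≤ b := by
  have hlim : Tendsto (fun ε : ℝ => b + ε • c) (𝓝[>] 0) (𝓝 b) := by
    have hcont : Continuous fun ε : ℝ => b + ε • c := by fun_prop
    simpa using (hcont.tendsto 0).mono_left nhdsWithin_le_nhds
  exact ge_of_tendsto hlim (eventually_nhdsWithin_of_forall h)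

lemma summable_of_le_of_le {f g h : ℕ → 𝔄} (hfg : ∀ n, f n ≤ g n) (hgh : ∀ n, g n ≤ h n)
    (hf : Summable f) (hh : Summable h) : Summable g := by
  have hgf : Summable fun n => g n - f n := by
    rw [summable_iff_vanishing_norm]
    intro ε hε
    obtain ⟨s, hs⟩ := summable_iff_vanishing_norm.mp (hh.sub hf) ε hε
    refine ⟨s, fun t ht => (CStarAlgebra.norm_le_norm_of_nonneg_of_le ?_ ?_).trans_lt (hs t ht)⟩
    · exact Finset.sum_nonneg fun n _ => sub_nonneg.mpr (hfg n)
    · exact Finset.sum_le_sum fun n _ => sub_le_sub_right (hgh n) _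
  simpa using hgf.add hf

lemma mul_le_mul_of_nonneg_right_of_commute {c d p : 𝔄} (hcd : c ≤ d) (hp : 0 ≤ p)
    (hc : Commute c p) (hd : Commute d p) : c * p ≤ d * p := by
  rw [← sub_nonneg, ← sub_mul]
  exact (hd.sub_left hc).mul_nonneg (sub_nonneg.mpr hcd) hp

lemma sq_le_add_sq {a b : 𝔄} (ha : 0 ≤ a) (hb : 0 ≤ b) (hab : Commute a b) :
    a ^ 2 ≤ (a + b) ^ 2 := by
  have hab0 : 0 ≤ a * b := hab.mul_nonneg ha hb
  rw [hab.add_sq, add_assoc, le_add_iff_nonneg_right, mul_assoc, two_mul]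
  exact add_nonneg (add_nonneg hab0 hab0) hb.isSelfAdjoint.sq_nonneg

lemma add_sq_le_two_smul {a b : 𝔄} (ha : IsSelfAdjoint a) (hb : IsSelfAdjoint b)
    (hab : Commute a b) : (a + b) ^ 2 ≤ (2 : ℝ) • (a ^ 2 + b ^ 2) := by
  have hdiff : (2 : ℝ) • (a ^ 2 + b ^ 2) - (a + b) ^ 2 = (a - b) ^ 2 := by
    rw [hab.add_sq, hab.sub_sq, two_smul]
    abel
  rw [← sub_nonneg, hdiff]
  exact (ha.sub hb).sq_nonneg

section InnerOpSMul

variable {A : Type*} [NonUnitalSemiring A] [StarRing A] [Module ℂ A] [PartialOrder A] [Norm A]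
  {E : Type*} [AddCommGroup E] [Module ℂ E] [SMul Aᵐᵒᵖ E] [Norm E] [RightCStarModule A E]

lemma inner_op_smul_left (x y : E) (a : A) : ⟪x <• a, y⟫_A = star a * ⟪x, y⟫_A := by
  rw [← RightCStarModule.star_inner y, RightCStarModule.inner_op_smul_right, star_mul,
    RightCStarModule.star_inner]

lemma inner_op_smul_op_smul (x : E) (a : A) :
    ⟪x <• a, x <• a⟫_A = star a * ⟪x, x⟫_A * a := by
  rw [RightCStarModule.inner_op_smul_right, inner_op_smul_left]

end InnerOpSMul

lemma inner_op_smul_real_smul {A : Type*} [CStarAlgebra A] [PartialOrder A] {E : Type*}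
    [AddCommGroup E] [Module ℂ E] [SMul Aᵐᵒᵖ E] [Norm E] [RightCStarModule A E]
    (x : E) (r : ℝ) (a : A) :
    ⟪x <• (r • a), x <• (r • a)⟫_A = r ^ 2 • ⟪x <• a, x <• a⟫_A := by
  rw [inner_op_smul_op_smul, inner_op_smul_op_smul, star_smul, star_trivial, smul_mul_assoc,
    smul_mul_assoc, mul_smul_comm, smul_smul, sq]

section HilbertModule

variable {E : Type*} [AddCommGroup E] [Module ℂ E] [Module 𝔄ᵐᵒᵖ E] [Norm E]
  [RightCStarModule 𝔄 E]

theorem le_norm_sq_smul_inner_self {S : E → 𝔄} (hS : ∀ x a, S (x <• a) = star a * S x * a)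
    {B : 𝔄} (hB : ∀ x, S x ≤ ⟪x <• B, x <• B⟫_𝔄) (x : E) : S x ≤ ‖B‖ ^ 2 • ⟪x, x⟫_𝔄 := by
  refine le_of_forall_pos_le_add_smul (c := ‖B‖ ^ 2 • (1 : 𝔄)) fun ε hε => ?_
  set u := ⟪x, x⟫_𝔄 + ε • (1 : 𝔄)
  have hu : IsStrictlyPositive u :=
    (isStrictlyPositive_one.smul hε).nonneg_add RightCStarModule.inner_self_nonneg
  set d := u ^ (-(1 / 2) : ℝ)
  set s := CFC.sqrt u with hs_def
  have hds : d * s = 1 := by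
    rw [hs_def, CFC.sqrt_eq_rpow]
    exact CFC.rpow_neg_mul_rpow _ hu
  have hd : star d = d := (CFC.rpow_nonneg (a := u)).isSelfAdjoint.star_eq
  have hs : star s = s := (CFC.sqrt_nonneg u).isSelfAdjoint.star_eq
  have hSd : S (x <• d) ≤ algebraMap ℝ 𝔄 (‖B‖ ^ 2) :=
    calc S (x <• d) ≤ star B * (star d * ⟪x, x⟫_𝔄 * d) * B := by
          simpa only [inner_op_smul_op_smul] using hB (x <• d)
      _ ≤ star B * (star d * u * d) * B :=
          star_left_conjugate_le_conjugate (star_left_conjugate_le_conjugate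
            (le_add_of_nonneg_right (smul_nonneg hε.le zero_le_one)) d) B
      _ = star B * B := by rw [hd, CFC.conjugate_rpow_neg_one_half u hu, mul_one]
      _ ≤ algebraMap ℝ 𝔄 (‖B‖ ^ 2) := CStarAlgebra.star_mul_le_algebraMap_norm_sq
  calc S x = star s * S (x <• d) * s := by
        rw [← hS, op_smul_op_smul, hds, MulOpposite.op_one, one_smul]
    _ ≤ star s * algebraMap ℝ 𝔄 (‖B‖ ^ 2) * s := star_left_conjugate_le_conjugate hSd s
    _ = ‖B‖ ^ 2 • ⟪x, x⟫_𝔄 + ε • ‖B‖ ^ 2 • (1 : 𝔄) := by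
        rw [hs, ← Algebra.commutes, mul_assoc, CFC.sqrt_mul_sqrt_self u hu.nonneg,
          ← Algebra.smul_def, smul_add, smul_comm]

end HilbertModule

lemma IsWeight.add {α β : ℕ → 𝔄} (hα : IsWeight α) (hβ : IsWeight β) :
    IsWeight fun n => α n + β n := fun n =>
  ⟨Set.add_mem_center (hα n).1 (hβ n).1, IsStrictlyPositive.add_nonneg (hα n).2 (hβ n).2.1⟩

lemma IsWeight.smul {α : ℕ → 𝔄} (hα : IsWeight α) {l : ℝ} (hl : 0 < l) :
    IsWeight fun n => l • α n := fun n =>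
  ⟨Set.smul_mem_center l (hα n).1, IsStrictlyPositive.smul hl (hα n).2⟩

section FusionFrame

variable {E : Type*} [NormedAddCommGroup E] [NormedSpace ℂ E] [Module 𝔄ᵐᵒᵖ E]
  [RightCStarModule 𝔄 E] {P : ℕ → E →L[ℂ] E}
  (hP : ∀ n (a : 𝔄) (x : E), P n (x <• a) = P n x <• a)
include hP

theorem IsFusionFrameWith.tsum_le_norm_sq_smul_inner_self {ω : ℕ → 𝔄}
    (hω : ∀ n, ω n ∈ Set.center 𝔄) {A B : 𝔄} (h : IsFusionFrameWith P ω A B) (x : E) :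
    ∑' n, ω n ^ 2 * ⟪P n x, P n x⟫_𝔄 ≤ ‖B‖ ^ 2 • ⟪x, x⟫_𝔄 := by
  refine le_norm_sq_smul_inner_self (fun y a => ?_) (fun y => (h.2.2 y).2.2) x
  have hterm : ∀ n, ω n ^ 2 * ⟪P n (y <• a), P n (y <• a)⟫_𝔄
      = star a * (ω n ^ 2 * ⟪P n y, P n y⟫_𝔄) * a := fun n => by
    rw [hP, inner_op_smul_op_smul, ← mul_assoc, ← mul_assoc,
      (((Set.mem_center_iff.mp (hω n)).comm (star a)).pow_left 2).eq, mul_assoc (star a)]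
  simp only [hterm]
  rw [Summable.tsum_mul_right _ ((h.2.2 y).1.mul_left _), Summable.tsum_mul_left _ (h.2.2 y).1]

theorem IsFusionFrame.of_smul_sq_le_of_sq_le_smul {α β γ : ℕ → 𝔄}
    (hα : ∀ n, α n ∈ Set.center 𝔄) (hβ : ∀ n, β n ∈ Set.center 𝔄) (hγ : ∀ n, γ n ∈ Set.center 𝔄)
    (hαF : IsFusionFrame P α) (hβF : IsFusionFrame P β) {s t : ℝ} (hs : 0 < s) (ht : 0 ≤ t)
    (hlow : ∀ n, s • α n ^ 2 ≤ γ n ^ 2) (hup : ∀ n, γ n ^ 2 ≤ t • (α n ^ 2 + β n ^ 2)) :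
    IsFusionFrame P γ := by
  obtain ⟨A, B₁, hF₁⟩ := hαF
  obtain ⟨A₂, B₂, hF₂⟩ := hβF
  set r := t * (‖B₁‖ ^ 2 + ‖B₂‖ ^ 2) + 1
  have hr : 0 < r := by positivity
  refine ⟨√s • A, √r • (1 : 𝔄), IsStrictlyPositive.smul (Real.sqrt_pos.mpr hs) hF₁.1,
    isStrictlyPositive_one.smul (Real.sqrt_pos.mpr hr), fun x => ?_⟩
  set p := fun n => ⟪P n x, P n x⟫_𝔄
  have hp : ∀ n, 0 ≤ p n := fun n => RightCStarModule.inner_self_nonneg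
  have hcomm : ∀ {ω : ℕ → 𝔄}, (∀ n, ω n ∈ Set.center 𝔄) → ∀ n, Commute (ω n ^ 2) (p n) :=
    fun hω n => ((Set.mem_center_iff.mp (hω n)).comm (p n)).pow_left 2
  have hlow' : ∀ n, s • (α n ^ 2 * p n) ≤ γ n ^ 2 * p n := fun n => by
    rw [← smul_mul_assoc]
    exact mul_le_mul_of_nonneg_right_of_commute (hlow n) (hp n) ((hcomm hα n).smul_left s)
      (hcomm hγ n)
  have hup' : ∀ n, γ n ^ 2 * p n ≤ t • (α n ^ 2 * p n + β n ^ 2 * p n) := fun n => by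
    rw [← add_mul, ← smul_mul_assoc]
    exact mul_le_mul_of_nonneg_right_of_commute (hup n) (hp n) (hcomm hγ n)
      (((hcomm hα n).add_left (hcomm hβ n)).smul_left t)
  have hsα := (hF₁.2.2 x).1
  have hsβ := (hF₂.2.2 x).1
  have hsαβ := hsα.add hsβ
  have hsum : Summable fun n => γ n ^ 2 * p n :=
    summable_of_le_of_le hlow' hup' (hsα.const_smul s) (hsαβ.const_smul t)
  refine ⟨hsum, ?_, ?_⟩
  · calc ⟪x <• (√s • A), x <• (√s • A)⟫_𝔄 = s • ⟪x <• A, x <• A⟫_𝔄 := by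
          rw [inner_op_smul_real_smul, Real.sq_sqrt hs.le]
      _ ≤ s • ∑' n, α n ^ 2 * p n := smul_le_smul_of_nonneg_left (hF₁.2.2 x).2.1 hs.le
      _ = ∑' n, s • (α n ^ 2 * p n) := (hsα.tsum_const_smul s).symm
      _ ≤ ∑' n, γ n ^ 2 * p n := Summable.tsum_le_tsum hlow' (hsα.const_smul s) hsum
  · calc ∑' n, γ n ^ 2 * p n ≤ ∑' n, t • (α n ^ 2 * p n + β n ^ 2 * p n) :=
          Summable.tsum_le_tsum hup' hsum (hsαβ.const_smul t)
      _ = t • ((∑' n, α n ^ 2 * p n) + ∑' n, β n ^ 2 * p n) := by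
          rw [hsαβ.tsum_const_smul, hsα.tsum_add hsβ]
      _ ≤ t • (‖B₁‖ ^ 2 • ⟪x, x⟫_𝔄 + ‖B₂‖ ^ 2 • ⟪x, x⟫_𝔄) :=
          smul_le_smul_of_nonneg_left (add_le_add
            (hF₁.tsum_le_norm_sq_smul_inner_self hP hα x)
            (hF₂.tsum_le_norm_sq_smul_inner_self hP hβ x)) ht
      _ ≤ r • ⟪x, x⟫_𝔄 := by
          rw [← add_smul, smul_smul]
          exact smul_le_smul_of_nonneg_right (by linarith) RightCStarModule.inner_self_nonneg
      _ = ⟪x <• (√r • (1 : 𝔄)), x <• (√r • (1 : 𝔄))⟫_𝔄 := by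
          rw [inner_op_smul_real_smul, Real.sq_sqrt hr.le, MulOpposite.op_one, one_smul]

end FusionFrame

/-- Theorem 3.8: the set `𝔪((ℌ_n)_n)` of weights `ω` such that `((ℌ_n, ω_n))_n` is a
*-fusion frame of `H` is a convex cone of `𝔄^ℕ`: it is closed under addition and under
multiplication by positive real scalars. -/
theorem multipliers_convex_cone
    (P : ℕ → H →L[ℂ] H) (ℌ : ℕ → Submodule 𝔄ᵐᵒᵖ H)
    (hproj : ∀ n, IsOrthoProjectionOnto (P n) (ℌ n)) :
    (∀ α β : ℕ → 𝔄,
      IsWeight α → IsFusionFrame P α → IsWeight β → IsFusionFrame P β →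
        IsWeight (fun n => α n + β n) ∧ IsFusionFrame P (fun n => α n + β n)) ∧
    (∀ α : ℕ → 𝔄, IsWeight α → IsFusionFrame P α → ∀ l : ℝ, 0 < l →
        IsWeight (fun n => (l : ℂ) • α n) ∧ IsFusionFrame P (fun n => (l : ℂ) • α n)) := by
  have hP : ∀ n (a : 𝔄) (x : H), P n (x <• a) = P n x <• a := fun n => (hproj n).1
  have hcomm : ∀ {α β : ℕ → 𝔄}, IsWeight α → ∀ n, Commute (α n) (β n) :=
    fun hα n => (Set.mem_center_iff.mp (hα n).1).comm _
  refine ⟨fun α β hα hαF hβ hβF => ⟨hα.add hβ, ?_⟩, fun α hα hαF l hl => ?_⟩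
  · refine IsFusionFrame.of_smul_sq_le_of_sq_le_smul hP (fun n => (hα n).1) (fun n => (hβ n).1)
      (fun n => (hα.add hβ n).1) hαF hβF one_pos zero_le_two (fun n => ?_) (fun n => ?_)
    · rw [one_smul]
      exact sq_le_add_sq (hα n).2.1 (hβ n).2.1 (hcomm hα n)
    · exact add_sq_le_two_smul (hα n).2.1.isSelfAdjoint (hβ n).2.1.isSelfAdjoint (hcomm hα n)
  · simp only [Complex.coe_smul]
    refine ⟨hα.smul hl, IsFusionFrame.of_smul_sq_le_of_sq_le_smul hP (fun n => (hα n).1)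
      (fun n => (hα n).1) (fun n => (hα.smul hl n).1) hαF hαF (pow_pos hl 2) (sq_nonneg l)
      (fun n => (smul_pow ..).ge) (fun n => ?_)⟩
    rw [smul_pow]
    exact smul_le_smul_of_nonneg_left
      (le_add_of_nonneg_right (hα n).2.1.isSelfAdjoint.sq_nonneg) (sq_nonneg l)
end
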